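/- Let K be a totally imaginary quartic number field, p a rational prime totally ramified in K/ℚ, and suppose β ≡ α^4 mod p for some integers α, β not divisible by p. If no positive integer b < p with b ≡ β mod p is the norm of an element of O_K, then K is not norm-Euclidean. -/

import Mathlib

/-!
A norm-Euclidean field has class number one, so `P = (π)` and `p = u π⁴` with `u` a unit, whence
`|N π| = p`. Dividing `α π³` by `p` with a remainder of norm `< 1` produces `α π³ - p η = π³ γ`
with `|N γ| < p`. Since `γ ≡ α` modulo `π`, and `π⁴ ∣ p`, the norm satisfies `N γ ≡ α⁴ ≡ β` modulo
`p`; in a totally imaginary field `N γ > 0`, so `N γ` is a forbidden value `b`.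
-/

open NumberField

def IsNormEuclidean (K : Type*) [Field K] [NumberField K] : Prop :=
  ∀ ξ : K, ∃ η : 𝓞 K, |Algebra.norm ℚ (ξ - (η : K))| < 1

/-- A number field is totally imaginary if no embedding into `ℂ` is real. -/
def IsTotallyImaginary (K : Type*) [Field K] [NumberField K] : Prop :=
  ∀ φ : K →+* ℂ, ¬ ComplexEmbedding.IsReal φ

theorem Algebra.norm_intCast_add_modEq {R : Type*} [CommRing R] [Nontrivial R] [Module.Free ℤ R]
    [Module.Finite ℤ R] {p : ℕ} [hp : Fact p.Prime] (a : ℤ) {x : R} {k : ℕ}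
    (hx : (p : R) ∣ x ^ k) :
    Algebra.norm ℤ ((a : R) + x) ≡ a ^ Module.finrank ℤ R [ZMOD p] := by
  let b := Module.Free.chooseBasis ℤ R
  have : Nonempty (Module.Free.ChooseBasisIndex ℤ R) := b.index_nonempty
  let B : R →+* Matrix _ _ (ZMod p) :=
    (Int.castRingHom (ZMod p)).mapMatrix.comp (Algebra.leftMulMatrix b).toRingHom
  have norm_eq_det (y : R) : (Algebra.norm ℤ y : ZMod p) = (B y).det := by
    rw [Algebra.norm_eq_matrix_det b y]
    exact (Int.castRingHom (ZMod p)).map_det _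
  have hBa : B a = Matrix.scalar _ (a : ZMod p) := by rw [map_intCast, map_intCast]
  have hBx : B x ^ p ^ k = 0 := by
    obtain ⟨w, hw⟩ := hx
    rw [← pow_sub_mul_pow _ (Nat.lt_pow_self hp.out.one_lt).le, ← map_pow B x k, hw, map_mul,
      map_natCast, CharP.cast_eq_zero, zero_mul, mul_zero]
  -- `B x` is nilpotent, so the Frobenius `M ↦ M ^ p ^ k` kills it and fixes the scalar `B a`.
  have frobenius : B (a + x) ^ p ^ k = B a := by
    have hcomm : Commute (B a) (B x) := hBa ▸ Matrix.scalar_commute _ (Commute.all _) _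
    rw [map_add, add_pow_char_pow_of_commute p k hcomm, hBx, add_zero, hBa, ← map_pow,
      ZMod.pow_card_pow]
  rw [← ZMod.intCast_eq_intCast_iff, norm_eq_det, ← ZMod.pow_card_pow (n := k) (B _).det,
    ← Matrix.det_pow, frobenius, hBa, Matrix.scalar_apply, Matrix.det_diagonal, Finset.prod_const,
    Finset.card_univ, ← Module.finrank_eq_card_chooseBasisIndex, Int.cast_pow]

section NumberField

variable {K : Type*} [Field K] [NumberField K]

open InfinitePlace ComplexEmbedding in
theorem IsTotallyImaginary.norm_pos (him : IsTotallyImaginary K) {x : K} (hx : x ≠ 0) :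
    0 < Algebra.norm ℚ x := by
  classical
  have fiber (w : InfinitePlace K) :
      ({φ | mk φ = w} : Finset (K →+* ℂ)) = {w.embedding, conjugate w.embedding} := by
    ext φ
    rw [Finset.mem_filter, Finset.mem_insert, Finset.mem_singleton,
      ← (involutive_conjugate K).eq_iff]
    nth_rewrite 1 [← mk_embedding w]
    simp only [Finset.mem_univ, true_and, mk_eq_iff]
  have hprod : (algebraMap ℚ ℂ (Algebra.norm ℚ x)) =
      ((∏ w : InfinitePlace K, Complex.normSq (w.embedding x) : ℝ) : ℂ) := by
    rw [Algebra.norm_eq_prod_embeddings ℚ ℂ x,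
      ← Fintype.prod_equiv (RingHom.equivRatAlgHom K ℂ) (fun φ => φ x) _ (fun _ => rfl),
      ← Finset.prod_fiberwise Finset.univ mk, Complex.ofReal_prod]
    refine Finset.prod_congr rfl fun w _ => ?_
    rw [fiber, Finset.prod_pair (fun h => him _ (isReal_iff.mpr h.symm)), conjugate_coe_eq,
      Complex.mul_conj]
  have : (Algebra.norm ℚ x : ℝ) = ∏ w : InfinitePlace K, Complex.normSq (w.embedding x) := by
    rw [eq_ratCast, ← Complex.ofReal_ratCast] at hprod
    exact Complex.ofReal_injective hprod
  exact_mod_cast this ▸ Finset.prod_pos fun w _ =>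
    Complex.normSq_pos.mpr ((map_ne_zero _).mpr hx)

theorem NumberField.RingOfIntegers.abs_norm_eq_of_associated_pow {m : ℕ} {π : 𝓞 K}
    (h : Associated (m : 𝓞 K) (π ^ Module.finrank ℚ K)) : |Algebra.norm ℤ π| = m := by
  obtain ⟨u, hu⟩ := h
  have hu1 : |Algebra.norm ℤ (u : 𝓞 K)| = 1 :=
    Int.isUnit_iff_abs_eq.mp (u.isUnit.map (Algebra.norm ℤ))
  have := congrArg (fun x => |Algebra.norm ℤ x|) hu
  simp only [map_mul, map_pow, abs_mul, abs_pow, hu1, mul_one, Algebra.norm_natCast,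
    RingOfIntegers.rank, Nat.abs_cast] at this
  exact (pow_left_inj₀ (abs_nonneg _) (Nat.cast_nonneg m) Module.finrank_pos.ne').mp this.symm

namespace IsNormEuclidean

theorem exists_natAbs_norm_sub_mul_lt (h : IsNormEuclidean K) (a : 𝓞 K) {b : 𝓞 K} (hb : b ≠ 0) :
    ∃ q : 𝓞 K, (Algebra.norm ℤ (a - b * q)).natAbs < (Algebra.norm ℤ b).natAbs := by
  obtain ⟨q, hq⟩ := h ((a : K) / b)
  have hb' : (b : K) ≠ 0 := by simpa using hb
  refine ⟨q, ?_⟩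
  have hcoe : ((a - b * q : 𝓞 K) : K) = ((a : K) / b - q) * b := by push_cast; field_simp
  zify
  rw [← Int.cast_lt (R := ℚ), Int.cast_abs, Int.cast_abs,
    Algebra.coe_norm_int, Algebra.coe_norm_int, hcoe, map_mul, abs_mul]
  exact mul_lt_of_lt_one_left (abs_pos.mpr (Algebra.norm_ne_zero_iff.mpr hb')) hq

theorem isPrincipalIdealRing (h : IsNormEuclidean K) : IsPrincipalIdealRing (𝓞 K) where
  principal I := by
    rcases eq_or_ne I ⊥ with rfl | hI
    · exact bot_isPrincipal
    obtain ⟨g, ⟨hgI, hg0⟩, hmin⟩ :=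
      (measure fun x : 𝓞 K => (Algebra.norm ℤ x).natAbs).wf.has_min {x | x ∈ I ∧ x ≠ 0}
        (Submodule.exists_mem_ne_zero_of_ne_bot hI)
    refine ⟨g, le_antisymm (fun a ha => Ideal.mem_span_singleton'.mpr ?_)
      ((Ideal.span_singleton_le_iff_mem I).mpr hgI)⟩
    obtain ⟨q, hq⟩ := h.exists_natAbs_norm_sub_mul_lt a hg0
    have : a - g * q = 0 := by
      by_contra hr
      exact hmin _ ⟨I.sub_mem ha (I.mul_mem_right q hgI), hr⟩ hq
    exact ⟨q, by linear_combination -this⟩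

theorem exists_norm_lt_modEq (h : IsNormEuclidean K) {p : ℕ} [Fact p.Prime]
    {π : 𝓞 K} (hπ : Associated (p : 𝓞 K) (π ^ Module.finrank ℚ K)) (α : ℤ) :
    ∃ γ : 𝓞 K, |Algebra.norm ℤ γ| < p ∧ Algebra.norm ℤ γ ≡ α ^ Module.finrank ℚ K [ZMOD p] := by
  set n := Module.finrank ℚ K
  have hπp := RingOfIntegers.abs_norm_eq_of_associated_pow hπ
  obtain ⟨u, hu⟩ := hπ
  obtain ⟨η, hη⟩ := h (α * π ^ (n - 1) / p)
  have hp : 0 < p := (Fact.out : p.Prime).pos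
  have hp0 : (p : K) ≠ 0 := Nat.cast_ne_zero.mpr hp.ne'
  have hpow : π ^ (n - 1) * π = π ^ n := pow_sub_one_mul Module.finrank_pos.ne' π
  -- For `ξ = α π ^ (n - 1) / p` we get `ξ - η = π ^ (n - 1) (α + x) / p` with `π ∣ x`.
  set x := -(π * (↑u⁻¹ * η))
  have hx : (p : 𝓞 K) ∣ x ^ n := ⟨u * (-(↑u⁻¹ * η)) ^ n, by
    rw [show x = π * (-(↑u⁻¹ * η)) by ring, mul_pow, ← hu]; ring⟩
  have hfactor : α * π ^ (n - 1) - p * η = π ^ (n - 1) * (α + x) := by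
    linear_combination (↑u⁻¹ * η) * hpow - (↑u⁻¹ * η) * hu + (p * η) * u.mul_inv
  refine ⟨α + x, ?_, ?_⟩
  · have hlt : |Algebra.norm ℤ (α * π ^ (n - 1) - p * η)| < p ^ n := by
      have hcoe : ((α * π ^ (n - 1) - p * η : 𝓞 K) : K) = (α * π ^ (n - 1) / p - η) * p := by
        push_cast [map_intCast]; field_simp
      rw [← Int.cast_lt (R := ℚ), Int.cast_abs, Algebra.coe_norm_int, hcoe, map_mul, abs_mul,
        Algebra.norm_natCast]
      push_cast
      rw [abs_pow, Nat.abs_cast]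
      exact mul_lt_of_lt_one_left (pow_pos (by exact_mod_cast hp) n) hη
    rw [hfactor, map_mul, map_pow, abs_mul, abs_pow, hπp, ← pow_sub_one_mul Module.finrank_pos.ne']
      at hlt
    exact lt_of_mul_lt_mul_left hlt (pow_nonneg (Nat.cast_nonneg p) _)
  · have := Algebra.norm_intCast_add_modEq α hx
    rwa [RingOfIntegers.rank] at this

end IsNormEuclidean

end NumberField

theorem quartic_totally_ramified_obstruction_general
    {K : Type*} [Field K] [NumberField K] (him : IsTotallyImaginary K)
    (h4 : Module.finrank ℚ K = 4)
    (p : ℕ) (hp : p.Prime) (P : Ideal (𝓞 K))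
    (hram : Ideal.span {(p : 𝓞 K)} = P ^ 4)
    (α β : ℤ) (hα : ¬ (p : ℤ) ∣ α)
    (hcong : (p : ℤ) ∣ β - α ^ 4)
    (hno : ¬ ∃ b : ℕ, 0 < b ∧ b < p ∧ (p : ℤ) ∣ (b : ℤ) - β ∧
        ∃ δ : 𝓞 K, Algebra.norm ℚ (δ : K) = b) :
    ¬ IsNormEuclidean K := by
  intro heuc
  have : Fact p.Prime := ⟨hp⟩
  have := heuc.isPrincipalIdealRing
  obtain ⟨π, rfl⟩ := (IsPrincipalIdealRing.principal P).principal
  have hπ : Associated (p : 𝓞 K) (π ^ Module.finrank ℚ K) := by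
    rwa [h4, ← Ideal.span_singleton_eq_span_singleton, ← Ideal.span_singleton_pow]
  obtain ⟨γ, hγp, hγα⟩ := heuc.exists_norm_lt_modEq hπ α
  rw [h4] at hγα
  have hγ0 : γ ≠ 0 := by
    rintro rfl
    rw [Algebra.norm_zero] at hγα
    exact hα (Int.Prime.dvd_pow' hp (by simpa using hγα.dvd))
  have hγpos : 0 < Algebra.norm ℤ γ := by
    have := him.norm_pos (x := (γ : K)) (by simpa using hγ0)
    rwa [← Algebra.coe_norm_int, Int.cast_pos] at this
  rw [abs_of_pos hγpos] at hγp
  refine hno ⟨(Algebra.norm ℤ γ).toNat, by omega, by omega, ?_, γ, ?_⟩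
  · rw [Int.toNat_of_nonneg hγpos.le]
    exact (hγα.trans (Int.modEq_iff_dvd.mpr hcong)).symm.dvd
  · rw [← Algebra.coe_norm_int, ← Int.cast_natCast, Int.toNat_of_nonneg hγpos.le]

theorem quartic_totally_ramified_obstruction
    {K : Type*} [Field K] [NumberField K] (him : IsTotallyImaginary K)
    (h4 : Module.finrank ℚ K = 4)
    (p : ℕ) (hp : p.Prime) (P : Ideal (𝓞 K)) (hP : P.IsPrime)
    (hram : Ideal.span {(p : 𝓞 K)} = P ^ 4)
    (α β : ℤ) (hα : ¬ (p : ℤ) ∣ α) (hβ : ¬ (p : ℤ) ∣ β)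
    (hcong : (p : ℤ) ∣ β - α ^ 4)
    (hno : ¬ ∃ b : ℕ, 0 < b ∧ b < p ∧ (p : ℤ) ∣ (b : ℤ) - β ∧
        ∃ δ : 𝓞 K, Algebra.norm ℚ (δ : K) = b) :
    ¬ IsNormEuclidean K :=
  quartic_totally_ramified_obstruction_general him h4 p hp P hram α β hα hcong hno
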